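/- Let w be a Lyndon binary word of length n with strictly more 1's than 0's, and let p_1 < … < p_m (m ≥ 1) be its unmatched positions, all carrying 1. Let w′ be the word obtained from w by changing the letter at position p_m from 1 to 0. If m ≥ 2, then the matched pairs of w′ are exactly the matched pairs of w together with the single new pair {p_1, p_m}, and the unmatched positions of w′ are p_2, …, p_{m−1}. If m = 1, then the matched pairs of w′ equal the matched pairs of w, and p_1 is the unique unmatched position of w′, now carrying 0. -/

import Mathlib

/-!
Common definitions: binary words of length `n`, rotations, necklaces (the quotient
poset `Bₙ/Cₙ`), the cyclic matching procedure, Lyndon words, the map `φ`,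
crossing pairs, and the words `w_t`.

Throughout, a binary word of length `n` is a function `Fin n → Bool`, where `true`
encodes the letter `1` and `false` the letter `0`.
-/

/-- A binary word of length `n`: `true` encodes the letter `1`, `false` the letter `0`. -/
abbrev Word (n : ℕ) := Fin n → Bool

variable {n : ℕ} [NeZero n]

/-- The rotation `σ_i`, shifting the letters of `w` cyclically by `i` positions (so the
letter at position `j` of `w` appears at position `j + i` of `rot i w`). -/
def rot (i : Fin n) (w : Word n) : Word n := fun j => w (j - i)

lemma rot_rot (i j : Fin n) (w : Word n) : rot i (rot j w) = rot (j + i) w := by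
  funext k
  simp [rot, sub_sub, add_comm]

/-- Two words are equivalent when one is a cyclic rotation of the other. -/
def rotSetoid (n : ℕ) [NeZero n] : Setoid (Word n) where
  r w w' := ∃ i : Fin n, rot i w = w'
  iseqv := by
    refine ⟨fun w => ⟨0, ?_⟩, ?_, ?_⟩
    · funext j; simp [rot]
    · rintro w w' ⟨i, rfl⟩
      refine ⟨-i, ?_⟩
      rw [rot_rot]
      funext j; simp [rot]
    · rintro w w' w'' ⟨i, rfl⟩ ⟨j, rfl⟩
      exact ⟨i + j, (rot_rot j i w).symm⟩

/-- A necklace: an equivalence class of binary words under cyclic rotation. -/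
abbrev Necklace (n : ℕ) [NeZero n] := Quotient (rotSetoid n)

/-- The necklace of a word. -/
def nec (w : Word n) : Necklace n := Quotient.mk (rotSetoid n) w

/-- The number of `1`s in a word. -/
def wt (w : Word n) : ℕ := (Finset.univ.filter fun i => w i = true).card

/-- The number of `0`s in a word. -/
def zeros (w : Word n) : ℕ := (Finset.univ.filter fun i => w i = false).card

/-- The rank of a necklace: the number of `1`s in any representative. -/
noncomputable def rank (u : Necklace n) : ℕ := wt (Quotient.out u)

/-- The set of positions belonging to some pair of `M`. -/
def matchedPos (M : Finset (Fin n × Fin n)) : Finset (Fin n) :=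
  M.image Prod.fst ∪ M.image Prod.snd

/-- `j` is the first position outside `S` encountered strictly after `i` in the cyclic
order `i+1, i+2, …` (indices mod `n`). -/
def FirstAfter (S : Finset (Fin n)) (i j : Fin n) : Prop :=
  j ∉ S ∧ j ≠ i ∧ ∀ k : Fin n, k ∉ S → k ≠ i → (j - i).val ≤ (k - i).val

/-- One step of the cyclic matching procedure on the word `w`: choose an as-yet-unmatched
position `i` carrying the letter `0` such that the first as-yet-unmatched position `j`
after `i` in cyclic order carries the letter `1`, and declare `{i, j}` a matched pair
(recorded as the ordered pair `(i, j)`, the `0`-position first). -/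
inductive MatchStep (w : Word n) :
    Finset (Fin n × Fin n) → Finset (Fin n × Fin n) → Prop
  | step {M : Finset (Fin n × Fin n)} {i j : Fin n}
      (hi : i ∉ matchedPos M) (hw : w i = false)
      (hj : FirstAfter (matchedPos M) i j) (hj1 : w j = true) :
      MatchStep w M (insert (i, j) M)

/-- A maximal execution of the cyclic matching procedure on `w`, starting from the empty
matching: `M` is reachable from `∅` by matching steps and no further step is possible. -/
def IsMaximalMatching (w : Word n) (M : Finset (Fin n × Fin n)) : Prop :=
  Relation.ReflTransGen (MatchStep w) ∅ M ∧ ∀ M', ¬ MatchStep w M M'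

/-- The cyclic matching of `w`: the set of matched pairs produced by (any) maximal
execution of the cyclic matching procedure. -/
noncomputable def matching (w : Word n) : Finset (Fin n × Fin n) :=
  letI := Classical.dec (∃ M, IsMaximalMatching w M)
  if h : ∃ M, IsMaximalMatching w M then h.choose else ∅

/-- The unmatched positions of `w`: positions belonging to no matched pair. -/
noncomputable def unmatchedPos (w : Word n) : Finset (Fin n) :=
  Finset.univ \ matchedPos (matching w)

/-- Lexicographic comparison of words with respect to the letter order `1 ≺ 0`
(recall `true` encodes `1` and `false` encodes `0`). -/
def lexLE (w w' : Word n) : Prop :=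
  w = w' ∨ ∃ i : Fin n, (∀ j : Fin n, j < i → w j = w' j) ∧ w i = true ∧ w' i = false

/-- A word is Lyndon if it is lexicographically smallest among all of its rotations,
with respect to the letter order `1 ≺ 0`. -/
def IsLyndon (w : Word n) : Prop := ∀ i : Fin n, lexLE w (rot i w)

/-- The Lyndon rearrangement of `w`: its lexicographically smallest rotation. -/
noncomputable def lyndonOf (w : Word n) : Word n :=
  letI := Classical.dec (∃ i : Fin n, IsLyndon (rot i w))
  if h : ∃ i : Fin n, IsLyndon (rot i w) then rot h.choose w else w

/-- Change the letter at the rightmost unmatched position of `w` to `0`. -/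
noncomputable def flipTop (w : Word n) : Word n :=
  if h : (unmatchedPos w).Nonempty then
    Function.update w ((unmatchedPos w).max' h) false
  else w

/-- The map `φ`: take the Lyndon rearrangement of a representative and change the letter
at its rightmost unmatched position (which carries a `1` on the upper half of ranks)
to `0`. -/
noncomputable def phi (u : Necklace n) : Necklace n :=
  nec (flipTop (lyndonOf (Quotient.out u)))

/-- `x` lies strictly inside the cyclic arc running from `i` (exclusive) to `k`
(exclusive), in the cyclic order of positions. -/
def StrictBtw (i x k : Fin n) : Prop :=
  0 < (x - i).val ∧ (x - i).val < (k - i).val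

/-- The pairs `{i, k}` and `{j, l}` cross: exactly one of `j, l` lies strictly inside one
of the two cyclic arcs determined by `i` and `k`. -/
def Crosses (i k j l : Fin n) : Prop := Xor' (StrictBtw i j k) (StrictBtw i l k)

/-- `wT w t` is the word obtained from `w` by changing the letters at the last `t`
unmatched positions of `w` to `0`; that is, if the unmatched positions of `w` are
`p₁ < … < p_m`, the positions `p_{m-t+1}, …, p_m` are changed to `0`. -/
noncomputable def wT (w : Word n) (t : ℕ) : Word n := fun j =>
  if j ∈ unmatchedPos w ∧ ((unmatchedPos w).filter fun k => j ≤ k).card ≤ t then false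
  else w j

/-- The order on necklaces (the poset `Bₙ/Cₙ`): `u ≤ v` iff there are representatives
`w` of `u` and `w'` of `v` such that every position carrying `1` in `w` also carries `1`
in `w'`. -/
def nle (u v : Necklace n) : Prop :=
  ∃ w w' : Word n, nec w = u ∧ nec w' = v ∧ ∀ i, w i = true → w' i = true

/-- The strict order on necklaces. -/
def nlt (u v : Necklace n) : Prop := nle u v ∧ u ≠ v

/-- `v` covers `u` in `Bₙ/Cₙ`: `u < v` and there is no `z` with `u < z < v`. -/
def ncovBy (u v : Necklace n) : Prop := nlt u v ∧ ∀ z, nlt u z → ¬ nlt z v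

/-- A chain top: a necklace `v` in the upper half of ranks (`2·rank v ≥ n`) which is not
the image under `φ` of any necklace in the strict upper half of ranks. -/
def IsChainTop (v : Necklace n) : Prop :=
  n ≤ 2 * rank v ∧ ∀ u : Necklace n, n < 2 * rank u → phi u ≠ v

/-- The `φ`-string below the chain top `v`: the necklaces of the words `w_t`,
`0 ≤ t ≤ m`, where `w` is the Lyndon representative of `v` and `m = 2·rank v − n`. -/
noncomputable def chainOf (v : Necklace n) : Set (Necklace n) :=
  { u | ∃ t ≤ 2 * rank v - n, u = nec (wT (lyndonOf (Quotient.out v)) t) }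

/-! The matching procedure is confluent: two different steps available at the same state
involve four distinct positions and remain available after one another, so every run that
ends in a state where no step applies produces `matching w`. In such a terminal state there
is no unmatched `0` together with an unmatched `1`, since the unmatched `0` cyclically
closest before an unmatched `1` could still be matched. Each matched pair consumes one `0`
and one `1`, so a majority of `1`s forces every unmatched letter of `w` to be `1`.

Flipping `p_m` to `0` does not affect the letters of matched positions, so the run producing
`matching w` is still a run for `w'`. In `w'` the first unmatched position after `p_m` is
`p_1`, which carries a `1`; one more step matches `{p_m, p_1}`, after which every unmatched
letter is `1` and the run is terminal. If `m = 1`, then `p_m` is the only unmatched position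
and no step applies at all. -/

section CyclicDistance

variable {n : ℕ}

lemma Fin.val_sub_eq_ite (a b : Fin n) :
    (a - b).val = if b ≤ a then a.val - b.val else n + a.val - b.val := by
  split_ifs with h
  · exact Fin.coe_sub_iff_le.mpr h
  · exact Fin.coe_sub_iff_lt.mpr (not_le.mp h)

lemma Fin.eq_of_val_sub_eq {a b c : Fin n} (h : (a - c).val = (b - c).val) : a = b := by
  simp only [Fin.val_sub_eq_ite, Fin.le_def] at h
  ext
  split_ifs at h <;> omega

lemma Fin.val_sub_lt_of_val_sub_lt {i j a : Fin n} (hji : j ≠ i)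
    (h : (j - i).val < (a - i).val) : (a - j).val < (a - i).val := by
  have := Fin.val_ne_of_ne hji
  simp only [Fin.val_sub_eq_ite, Fin.le_def] at *
  split_ifs at * <;> omega

lemma Fin.val_sub_lt_of_val_sub_le {i i' j : Fin n} (hii' : i ≠ i') (hji : j ≠ i)
    (hji' : j ≠ i') (h : (j - i).val ≤ (i' - i).val) : (i - i').val < (j - i').val := by
  have := Fin.val_ne_of_ne hii'; have := Fin.val_ne_of_ne hji; have := Fin.val_ne_of_ne hji'
  simp only [Fin.val_sub_eq_ite, Fin.le_def] at *
  split_ifs at * <;> omega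

end CyclicDistance

section Matching

variable {n : ℕ} {w w' : Word n} {S : Finset (Fin n)} {M M' : Finset (Fin n × Fin n)}

lemma FirstAfter.unique {i j j' : Fin n} (h : FirstAfter S i j) (h' : FirstAfter S i j') :
    j = j' :=
  Fin.eq_of_val_sub_eq (le_antisymm (h.2.2 j' h'.1 h'.2.1) (h'.2.2 j h.1 h.2.1))

lemma exists_firstAfter {i k : Fin n} (hk : k ∉ S) (hki : k ≠ i) : ∃ j, FirstAfter S i j := by
  obtain ⟨j, hj, hmin⟩ := Finset.exists_min_image
    (Finset.univ.filter fun x => x ∉ S ∧ x ≠ i) (fun x => (x - i).val) ⟨k, by simp [hk, hki]⟩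
  simp only [Finset.mem_filter, Finset.mem_univ, true_and] at hj
  exact ⟨j, hj.1, hj.2, fun x hx hxi => hmin x (by simp [hx, hxi])⟩

lemma firstAfter_max'_min' (h : 1 < (Finset.univ \ S).card) :
    FirstAfter S ((Finset.univ \ S).max' (Finset.card_pos.mp (by omega)))
      ((Finset.univ \ S).min' (Finset.card_pos.mp (by omega))) := by
  have hlt := Finset.min'_lt_max'_of_card _ h
  refine ⟨?_, hlt.ne, fun k hk hkmax => ?_⟩
  · simpa using Finset.min'_mem (Finset.univ \ S) _
  · have hk' : k ∈ Finset.univ \ S := by simpa using hk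
    have h1 := Finset.min'_le _ _ hk'
    have h2 := lt_of_le_of_ne (Finset.le_max' _ _ hk') hkmax
    rw [Fin.val_sub_eq_ite, Fin.val_sub_eq_ite, if_neg (not_le.mpr hlt), if_neg (not_le.mpr h2)]
    rw [Fin.le_def] at h1
    omega

lemma mem_matchedPos {x : Fin n} : x ∈ matchedPos M ↔ ∃ p ∈ M, p.1 = x ∨ p.2 = x := by
  simp only [matchedPos, Finset.mem_union, Finset.mem_image]
  grind

lemma matchedPos_insert (i j : Fin n) :
    matchedPos (insert (i, j) M) = insert i (insert j (matchedPos M)) := by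
  ext x
  simp only [mem_matchedPos, Finset.mem_insert, exists_eq_or_imp]
  grind

lemma mem_unmatchedPos {i : Fin n} : i ∈ unmatchedPos w ↔ i ∉ matchedPos (matching w) := by
  simp [unmatchedPos]

lemma MatchStep.card_eq (h : MatchStep w M M') : M'.card = M.card + 1 := by
  obtain ⟨hi, -, -, -⟩ := h
  exact Finset.card_insert_of_notMem fun hm => hi (mem_matchedPos.mpr ⟨_, hm, Or.inl rfl⟩)

lemma FirstAfter.mono {T : Finset (Fin n)} {i j : Fin n} (h : FirstAfter S i j) (hST : S ⊆ T)
    (hj : j ∉ T) : FirstAfter T i j :=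
  ⟨hj, h.2.1, fun k hk hki => h.2.2 k (fun hkS => hk (hST hkS)) hki⟩

lemma MatchStep.insert_of_ne {i j i' j' : Fin n} (hi : i ∉ matchedPos M) (hwi : w i = false)
    (hj : FirstAfter (matchedPos M) i j) (hj1 : w j = true) (hi'j : i' ≠ j) (hii' : i' ≠ i)
    (hj'i : j' ≠ i) (hjj' : j' ≠ j) :
    MatchStep w (insert (i', j') M) (insert (i, j) (insert (i', j') M)) := by
  refine .step ?_ hwi (hj.mono ?_ ?_) hj1
  · simp [matchedPos_insert, hii'.symm, hj'i.symm, hi]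
  · simp only [matchedPos_insert]
    exact (Finset.subset_insert _ _).trans (Finset.subset_insert _ _)
  · simp [matchedPos_insert, hi'j.symm, hjj'.symm, hj.1]

lemma MatchStep.diamond {M₁ M₂ : Finset (Fin n × Fin n)} (h₁ : MatchStep w M M₁)
    (h₂ : MatchStep w M M₂) : M₁ = M₂ ∨ ∃ M₃, MatchStep w M₁ M₃ ∧ MatchStep w M₂ M₃ := by
  obtain ⟨hi, hwi, hj, hj1⟩ := h₁
  rename_i i j
  obtain ⟨hi', hwi', hj', hj1'⟩ := h₂
  rename_i i' j'
  by_cases hii' : i = i'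
  · subst hii'
    exact Or.inl (by rw [hj.unique hj'])
  have hji' : j ≠ i' := fun h => by simp [h, hwi'] at hj1
  have hj'i : j' ≠ i := fun h => by simp [h, hwi] at hj1'
  have hjj' : j ≠ j' := by
    rintro rfl
    exact absurd (hj'.2.2 i hi hii')
      (not_le.mpr (Fin.val_sub_lt_of_val_sub_le hii' hj.2.1 hji' (hj.2.2 i' hi' (Ne.symm hii'))))
  refine Or.inr ⟨insert (i', j') (insert (i, j) M), ?_, ?_⟩
  · exact .insert_of_ne hi' hwi' hj' hj1' hj'i.symm hii' hji' hjj'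
  · rw [Finset.insert_comm]
    exact .insert_of_ne hi hwi hj hj1 hji'.symm (Ne.symm hii') hj'i hjj'.symm

lemma exists_isMaximalMatching (w : Word n) : ∃ M, IsMaximalMatching w M := by
  classical
  obtain ⟨M, hM, hmax⟩ := Finset.exists_max_image
    (Finset.univ.filter fun M => Relation.ReflTransGen (MatchStep w) ∅ M)
    Finset.card ⟨∅, by simp [Relation.ReflTransGen.refl]⟩
  simp only [Finset.mem_filter, Finset.mem_univ, true_and] at hM
  refine ⟨M, hM, fun M' hstep => ?_⟩
  have := hmax M' (by simpa using hM.tail hstep)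
  have := hstep.card_eq
  omega

lemma IsMaximalMatching.unique {M₁ M₂ : Finset (Fin n × Fin n)} (h₁ : IsMaximalMatching w M₁)
    (h₂ : IsMaximalMatching w M₂) : M₁ = M₂ := by
  have terminal {M N : Finset (Fin n × Fin n)} (hM : ∀ M', ¬ MatchStep w M M')
      (h : Relation.ReflTransGen (MatchStep w) M N) : M = N := by
    rcases h.cases_head with rfl | ⟨c, hc, -⟩
    · rfl
    · exact absurd hc (hM c)
  obtain ⟨d, hd₁, hd₂⟩ := Relation.church_rosser
    (fun a b c hab hac => by
      rcases hab.diamond hac with rfl | ⟨d, hd, hd'⟩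
      · exact ⟨b, .refl, .refl⟩
      · exact ⟨d, .single hd, .single hd'⟩)
    h₁.1 h₂.1
  rw [terminal h₁.2 hd₁, terminal h₂.2 hd₂]

lemma isMaximalMatching_matching (w : Word n) : IsMaximalMatching w (matching w) := by
  rw [matching, dif_pos (exists_isMaximalMatching w)]
  exact (exists_isMaximalMatching w).choose_spec

lemma IsMaximalMatching.matching_eq (h : IsMaximalMatching w M) : matching w = M :=
  (isMaximalMatching_matching w).unique h

lemma forall_not_matchStep_iff :
    (∀ M', ¬ MatchStep w M M') ↔
      ∀ i ∉ matchedPos M, ∀ j ∉ matchedPos M, w i = false → w j = false := by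
  constructor
  · intro hstuck i hi a ha hwi
    by_contra hwa
    rw [Bool.not_eq_false] at hwa
    -- the unmatched `0` cyclically closest before the unmatched `1` at `a` is still matchable
    obtain ⟨i₀, hi₀, hclosest⟩ := Finset.exists_min_image
      (Finset.univ.filter fun k => k ∉ matchedPos M ∧ w k = false) (fun k => (a - k).val)
      ⟨i, by simp [hi, hwi]⟩
    simp only [Finset.mem_filter, Finset.mem_univ, true_and] at hi₀
    have hai₀ : a ≠ i₀ := by rintro rfl; simp [hwa] at hi₀
    obtain ⟨j, hj⟩ := exists_firstAfter ha hai₀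
    cases hwj : w j with
    | true => exact hstuck _ (.step hi₀.1 hi₀.2 hj hwj)
    | false =>
      have hja : j ≠ a := by rintro rfl; simp [hwa] at hwj
      have hlt : (j - i₀).val < (a - i₀).val :=
        lt_of_le_of_ne (hj.2.2 a ha hai₀) fun e => hja (Fin.eq_of_val_sub_eq e)
      have := hclosest j (by simp [hj.1, hwj])
      have := Fin.val_sub_lt_of_val_sub_lt hj.2.1 hlt
      omega
  · rintro h M' ⟨hi, hwi, hj, hj1⟩
    simp [h _ hi _ hj.1 hwi] at hj1

lemma Relation.ReflTransGen.matchStep_letters (h : Relation.ReflTransGen (MatchStep w) ∅ M) :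
    ∀ p ∈ M, w p.1 = false ∧ w p.2 = true := by
  induction h with
  | refl => simp
  | tail _ hstep ih =>
    obtain ⟨-, hwi, -, hj1⟩ := hstep
    simpa [hwi, hj1] using ih

lemma Relation.ReflTransGen.matchStep_injOn_fst (h : Relation.ReflTransGen (MatchStep w) ∅ M) :
    Set.InjOn Prod.fst (M : Set (Fin n × Fin n)) := by
  induction h with
  | refl => simp
  | tail _ hstep ih =>
    obtain ⟨hi, -, -, -⟩ := hstep
    rw [Finset.coe_insert, Set.injOn_insert fun hm => hi (mem_matchedPos.mpr ⟨_, hm, Or.inl rfl⟩)]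
    exact ⟨ih, fun ⟨p, hp, he⟩ => hi (mem_matchedPos.mpr ⟨p, hp, Or.inl he⟩)⟩

lemma Relation.ReflTransGen.matchStep_of_eqOn (h : Relation.ReflTransGen (MatchStep w) ∅ M)
    (hag : ∀ i ∈ matchedPos M, w i = w' i) : Relation.ReflTransGen (MatchStep w') ∅ M := by
  induction h with
  | refl => exact .refl
  | tail _ hstep ih =>
    obtain ⟨hi, hwi, hj, hj1⟩ := hstep
    simp only [matchedPos_insert, Finset.mem_insert, forall_eq_or_imp] at hag
    exact (ih hag.2.2).tail (.step hi (hag.1 ▸ hwi) hj (hag.2.1 ▸ hj1))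

lemma card_matching_le_zeros (w : Word n) : (matching w).card ≤ zeros w := by
  have hrun := (isMaximalMatching_matching w).1
  rw [← Finset.card_image_of_injOn hrun.matchStep_injOn_fst, zeros]
  refine Finset.card_le_card fun x hx => ?_
  obtain ⟨p, hp, rfl⟩ := Finset.mem_image.mp hx
  simp [(hrun.matchStep_letters p hp).1]

lemma wt_le_card_matching (h : ∀ i ∈ unmatchedPos w, w i = false) :
    wt w ≤ (matching w).card := by
  have hrun := (isMaximalMatching_matching w).1
  refine le_trans (Finset.card_le_card fun x hx => ?_) (Finset.card_image_le (f := Prod.snd))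
  rw [Finset.mem_filter] at hx
  have hxm : x ∈ matchedPos (matching w) := by
    by_contra hxm
    simp [h x (mem_unmatchedPos.mpr hxm)] at hx
  obtain ⟨p, hp, rfl | rfl⟩ := mem_matchedPos.mp hxm
  · simp [(hrun.matchStep_letters p hp).1] at hx
  · exact Finset.mem_image_of_mem _ hp

lemma eq_true_of_mem_unmatchedPos (hmaj : zeros w < wt w) {i : Fin n}
    (hi : i ∈ unmatchedPos w) : w i = true := by
  by_contra hwi
  rw [Bool.not_eq_true] at hwi
  have hzero : ∀ j ∈ unmatchedPos w, w j = false := fun j hj =>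
    forall_not_matchStep_iff.mp (isMaximalMatching_matching w).2 i (mem_unmatchedPos.mp hi) j
      (mem_unmatchedPos.mp hj) hwi
  have := wt_le_card_matching hzero
  have := card_matching_le_zeros w
  omega

lemma reflTransGen_matchStep_update {p : Fin n} (hp : p ∈ unmatchedPos w) (b : Bool) :
    Relation.ReflTransGen (MatchStep (Function.update w p b)) ∅ (matching w) :=
  (isMaximalMatching_matching w).1.matchStep_of_eqOn fun i hi =>
    (Function.update_of_ne (by rintro rfl; exact mem_unmatchedPos.mp hp hi) _ _).symm

lemma matching_update_of_card_unmatchedPos_eq_one (h : (unmatchedPos w).card = 1) {p : Fin n}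
    (hp : p ∈ unmatchedPos w) (b : Bool) : matching (Function.update w p b) = matching w := by
  refine IsMaximalMatching.matching_eq
    ⟨reflTransGen_matchStep_update hp b, forall_not_matchStep_iff.mpr fun i hi j hj hwi => ?_⟩
  obtain ⟨a, ha⟩ := Finset.card_eq_one.mp h
  have hi' := mem_unmatchedPos.mpr hi
  have hj' := mem_unmatchedPos.mpr hj
  rw [ha, Finset.mem_singleton] at hi' hj'
  rwa [hj', ← hi']

lemma matching_update_max'_of_one_lt_card_unmatchedPos (hmaj : zeros w < wt w)
    (hne : (unmatchedPos w).Nonempty) (h : 1 < (unmatchedPos w).card) :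
    matching (Function.update w ((unmatchedPos w).max' hne) false) =
      insert ((unmatchedPos w).max' hne, (unmatchedPos w).min' hne) (matching w) := by
  set pm := (unmatchedPos w).max' hne
  set p1 := (unmatchedPos w).min' hne
  have hpm : pm ∈ unmatchedPos w := Finset.max'_mem _ hne
  have hlt : p1 < pm := Finset.min'_lt_max'_of_card _ h
  have hstep :
      MatchStep (Function.update w pm false) (matching w) (insert (pm, p1) (matching w)) :=
    .step (mem_unmatchedPos.mp hpm) (by simp) (firstAfter_max'_min' h)
      ((Function.update_of_ne hlt.ne _ _).trans
        (eq_true_of_mem_unmatchedPos hmaj (Finset.min'_mem _ hne)))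
  refine IsMaximalMatching.matching_eq ⟨(reflTransGen_matchStep_update hpm false).tail hstep,
    forall_not_matchStep_iff.mpr fun i hi j _ hwi => ?_⟩
  simp only [matchedPos_insert, Finset.mem_insert, not_or] at hi
  simp [hi.1, eq_true_of_mem_unmatchedPos hmaj (mem_unmatchedPos.mpr hi.2.2)] at hwi

end Matching

theorem flip_rightmost_unmatched_general (n : ℕ) (w : Word n)
    (hmaj : zeros w < wt w)
    (hne : (unmatchedPos w).Nonempty)
    (w' : Word n)
    (hw' : w' = Function.update w ((unmatchedPos w).max' hne) false) :
    (2 ≤ (unmatchedPos w).card →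
      matching w' =
        insert ((unmatchedPos w).max' hne, (unmatchedPos w).min' hne) (matching w) ∧
      unmatchedPos w' =
        unmatchedPos w \ {(unmatchedPos w).min' hne, (unmatchedPos w).max' hne}) ∧
    ((unmatchedPos w).card = 1 →
      matching w' = matching w ∧
      unmatchedPos w' = {(unmatchedPos w).max' hne} ∧
      w' ((unmatchedPos w).max' hne) = false) := by
  subst hw'
  refine ⟨fun hcard => ?_, fun hcard => ?_⟩
  · have hM := matching_update_max'_of_one_lt_card_unmatchedPos hmaj hne hcard
    refine ⟨hM, ?_⟩
    rw [unmatchedPos, hM, matchedPos_insert]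
    ext x
    simp only [Finset.mem_sdiff, Finset.mem_insert, Finset.mem_singleton, Finset.mem_univ,
      true_and, mem_unmatchedPos]
    tauto
  · have hpm := Finset.max'_mem _ hne
    have hM := matching_update_of_card_unmatchedPos_eq_one hcard hpm false
    refine ⟨hM, ?_, by simp⟩
    rw [unmatchedPos, hM, ← unmatchedPos]
    exact Finset.eq_singleton_iff_unique_mem.mpr
      ⟨hpm, fun x hx => Finset.card_le_one.mp hcard.le x hx _ hpm⟩

/-- Let `w` be a Lyndon word with strictly more `1`s than `0`s and
unmatched positions `p₁ < … < p_m` (`m ≥ 1`), and let `w'` be obtained from `w` by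
changing the letter at `p_m` from `1` to `0`.  If `m ≥ 2`, the matched pairs of `w'` are
exactly those of `w` together with the single new pair `{p₁, p_m}` (whose `0` is at
`p_m` and whose `1` is at `p₁`), and the unmatched positions of `w'` are
`p₂, …, p_{m−1}`.  If `m = 1`, the matched pairs of `w'` equal those of `w`, and `p₁` is
the unique unmatched position of `w'`, now carrying a `0`. -/
theorem flip_rightmost_unmatched (n : ℕ) [NeZero n] (w : Word n)
    (hL : IsLyndon w) (hmaj : zeros w < wt w)
    (hne : (unmatchedPos w).Nonempty)
    (w' : Word n)
    (hw' : w' = Function.update w ((unmatchedPos w).max' hne) false) :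
    (2 ≤ (unmatchedPos w).card →
      matching w' =
        insert ((unmatchedPos w).max' hne, (unmatchedPos w).min' hne) (matching w) ∧
      unmatchedPos w' =
        unmatchedPos w \ {(unmatchedPos w).min' hne, (unmatchedPos w).max' hne}) ∧
    ((unmatchedPos w).card = 1 →
      matching w' = matching w ∧
      unmatchedPos w' = {(unmatchedPos w).max' hne} ∧
      w' ((unmatchedPos w).max' hne) = false) :=
  flip_rightmost_unmatched_general n w hmaj hne w' hw'
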